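/- arXiv:1804.05558 — 2 statements merged into one kernel-verified Lean document; each statement's English description precedes it below -/
import Mathlib

section
/- Let $\vec a=(a_1,\dots,a_n)\in[1,\infty)^n$, $\vec p=(p_1,\dots,p_n)\in(0,1]^n$, $r\in(1,\infty]$ with conjugate exponent $r'$ ($1/r+1/r'=1$), and $s\in\mathbb{Z}_+$ with $s\ge\lfloor\frac{\nu}{a_-}(\frac{1}{p_-}-1)\rfloor$, where $\nu:=a_1+\cdots+a_n$, $a_-:=\min_i a_i$ and $p_-:=\min_i p_i$. If $g$ is a locally $r'$-integrable function on $\mathbb{R}^n$ with $\|g\|_{\mathcal L^{\vec a}_{\vec p,r',s}(\mathbb{R}^n)}<\infty$, then for every $m\in\mathbb{N}$, all $\lambda_1,\dots,\lambda_m\in\mathbb{C}$ and all $(\vec p,r,s)$-atoms $a_1,\dots,a_m$ supported, respectively, on anisotropic balls $B_1,\dots,B_m\in\mathfrak B$, the function $f:=\sum_{i=1}^m\lambda_i a_i$ satisfies $\big|\int_{\mathbb{R}^n} f(x)g(x)\,dx\big|\le\big\|\{\sum_{i=1}^m[|\lambda_i|\chi_{B_i}/\|\chi_{B_i}\|_{L^{\vec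 p}(\mathbb{R}^n)}]^{p_-}\}^{1/p_-}\big\|_{L^{\vec p}(\mathbb{R}^n)}\cdot\|g\|_{\mathcal L^{\vec a}_{\vec p,r',s}(\mathbb{R}^n)}$. -/
open MeasureTheory ENNReal Filter

noncomputable section

/-- The anisotropic homogeneous quasi-norm associated with `a`. -/
def anorm {n : ℕ} (a x : Fin n → ℝ) : ℝ :=
  sInf {t : ℝ | 0 < t ∧ ∑ i, x i ^ 2 / t ^ (2 * a i) = 1}

/-- The anisotropic ball with center `x` and radius `r`. -/
def aball {n : ℕ} (a x : Fin n → ℝ) (r : ℝ) : Set (Fin n → ℝ) :=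
  {y | anorm a (y - x) < r}

/-- The collection `𝔅` of all anisotropic balls. -/
def aballs {n : ℕ} (a : Fin n → ℝ) : Set (Set (Fin n → ℝ)) :=
  {B | ∃ x r, 0 < r ∧ B = aball a x r}

/-- Iterated mixed-norm of a nonnegative function: integrate the first variable
with exponent `p 0` (essential supremum if `p 0 = ∞`), then recurse. -/
def mixedNormF : {n : ℕ} → (Fin n → ℝ≥0∞) → ((Fin n → ℝ) → ℝ≥0∞) → ℝ≥0∞
  | 0, _, f => f fun i => i.elim0
  | _ + 1, p, f =>
    mixedNormF (fun i => p i.succ) fun y =>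
      if p 0 = ∞ then essSup (fun t => f (Fin.cons t y)) volume
      else (∫⁻ t, f (Fin.cons t y) ^ (p 0).toReal) ^ (1 / (p 0).toReal)

/-- The mixed-norm Lebesgue quasi-norm `‖f‖_{L^{p⃗}(ℝⁿ)}`. -/
def mixedNorm {n : ℕ} (p : Fin n → ℝ≥0∞) (f : (Fin n → ℝ) → ℂ) : ℝ≥0∞ :=
  mixedNormF p fun x => (‖f x‖₊ : ℝ≥0∞)

/-- `‖χ_B‖_{L^{p⃗}(ℝⁿ)}`. -/
def chiNorm {n : ℕ} (p : Fin n → ℝ≥0∞) (B : Set (Fin n → ℝ)) : ℝ≥0∞ :=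
  mixedNormF p (B.indicator fun _ => 1)

/-- `P` is (the function given by) a polynomial on `ℝⁿ` of total degree at most `s`. -/
def IsPolyDeg {n : ℕ} (s : ℕ) (P : (Fin n → ℝ) → ℂ) : Prop :=
  ∃ Q : MvPolynomial (Fin n) ℂ, Q.totalDegree ≤ s ∧
    ∀ x, P x = MvPolynomial.eval (fun i => (x i : ℂ)) Q

/-- The anisotropic mixed-norm Campanato quasi-norm `‖g‖_{𝓛^{a⃗}_{p⃗,q,s}(ℝⁿ)}`. -/
def campanatoNorm {n : ℕ} (a : Fin n → ℝ) (p : Fin n → ℝ≥0∞) (q : ℝ≥0∞) (s : ℕ)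
    (g : (Fin n → ℝ) → ℂ) : ℝ≥0∞ :=
  ⨆ B ∈ aballs a, ⨅ P ∈ {P : (Fin n → ℝ) → ℂ | IsPolyDeg s P},
    volume B / chiNorm p B *
      (if q = ∞ then essSup (fun x => (‖g x - P x‖₊ : ℝ≥0∞)) (volume.restrict B)
       else ((volume B)⁻¹ * ∫⁻ x in B, (‖g x - P x‖₊ : ℝ≥0∞) ^ q.toReal) ^ (1 / q.toReal))

/-- Local `q`-integrability on `ℝⁿ`. -/
def LocLp {n : ℕ} (q : ℝ≥0∞) (g : (Fin n → ℝ) → ℂ) : Prop :=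
  ∀ K : Set (Fin n → ℝ), IsCompact K → MemLp g q (volume.restrict K)

/-- The homogeneous dimension `ν = a_1 + ⋯ + a_n`. -/
def nuTotal {n : ℕ} (a : Fin n → ℝ) : ℝ := ∑ i, a i

/-- `a₋ = min {a_1, …, a_n}`. -/
def aMin {n : ℕ} (a : Fin n → ℝ) : ℝ := ⨅ i, a i

/-- `p₋ = min {p_1, …, p_n}`. -/
def pMinE {n : ℕ} (p : Fin n → ℝ≥0∞) : ℝ≥0∞ := ⨅ i, p i

/-- An anisotropic mixed-norm `(p⃗, r, s)`-atom supported on the anisotropic ball `B`. -/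
structure IsAtomFn {n : ℕ} (a : Fin n → ℝ) (p : Fin n → ℝ≥0∞) (r : ℝ≥0∞) (s : ℕ)
    (f : (Fin n → ℝ) → ℂ) (B : Set (Fin n → ℝ)) : Prop where
  measurable : Measurable f
  ball_mem : B ∈ aballs a
  support_subset : Function.support f ⊆ B
  size : eLpNorm f r volume ≤ volume B ^ (1 / r).toReal / chiNorm p B
  moments : ∀ α : Fin n → ℕ, (∑ i, α i) ≤ s → (∫ x, f x * ∏ i, (x i : ℂ) ^ α i) = 0

/-- The quantity `‖{∑_i [|λ_i| χ_{B_i} / ‖χ_{B_i}‖]^{p₋}}^{1/p₋}‖_{L^{p⃗}}` for a sequence. -/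
def atomSeqNorm {n : ℕ} (p : Fin n → ℝ≥0∞) (lam : ℕ → ℂ) (B : ℕ → Set (Fin n → ℝ)) : ℝ≥0∞ :=
  mixedNormF p fun x =>
    (∑' i, ((‖lam i‖₊ : ℝ≥0∞) * (B i).indicator (fun _ => 1) x / chiNorm p (B i))
        ^ (pMinE p).toReal) ^ (1 / (pMinE p).toReal)

/-- The quantity `‖{∑_{i=1}^m [|λ_i| χ_{B_i} / ‖χ_{B_i}‖]^{p₋}}^{1/p₋}‖_{L^{p⃗}}`
for a finite family. -/
def atomFinNorm {n : ℕ} (p : Fin n → ℝ≥0∞) {m : ℕ} (lam : Fin m → ℂ)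
    (B : Fin m → Set (Fin n → ℝ)) : ℝ≥0∞ :=
  mixedNormF p fun x =>
    (∑ i, ((‖lam i‖₊ : ℝ≥0∞) * (B i).indicator (fun _ => 1) x / chiNorm p (B i))
        ^ (pMinE p).toReal) ^ (1 / (pMinE p).toReal)

/-- Tempered distributions on `ℝⁿ`. -/
abbrev TDist (n : ℕ) := SchwartzMap (Fin n → ℝ) ℂ →L[ℂ] ℂ

/-- `T = ∑_i λ_i a_i` in `𝒮'(ℝⁿ)` with the `a_i` being `(p⃗,r,s)`-atoms on balls `B i`. -/
def HasAtomicRep {n : ℕ} (a : Fin n → ℝ) (p : Fin n → ℝ≥0∞) (r : ℝ≥0∞) (s : ℕ)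
    (T : TDist n) (lam : ℕ → ℂ) (A : ℕ → (Fin n → ℝ) → ℂ)
    (B : ℕ → Set (Fin n → ℝ)) : Prop :=
  (∀ i, IsAtomFn a p r s (A i) (B i)) ∧
    ∀ φ : SchwartzMap (Fin n → ℝ) ℂ,
      Filter.Tendsto (fun N => ∑ i ∈ Finset.range N, lam i * ∫ x, A i x * φ x)
        Filter.atTop (nhds (T φ))

/-- Membership in the anisotropic mixed-norm atomic Hardy space. -/
def MemHardy {n : ℕ} (a : Fin n → ℝ) (p : Fin n → ℝ≥0∞) (r : ℝ≥0∞) (s : ℕ)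
    (T : TDist n) : Prop :=
  ∃ lam A B, HasAtomicRep a p r s T lam A B

/-- The atomic Hardy space quasi-norm. -/
def hardyNorm {n : ℕ} (a : Fin n → ℝ) (p : Fin n → ℝ≥0∞) (r : ℝ≥0∞) (s : ℕ)
    (T : TDist n) : ℝ≥0∞ :=
  ⨅ (lam : ℕ → ℂ) (A : ℕ → (Fin n → ℝ) → ℂ) (B : ℕ → Set (Fin n → ℝ))
    (_ : HasAtomicRep a p r s T lam A B), atomSeqNorm p lam B

/-- `‖L‖ = sup {|L f| : f ∈ H, ‖f‖_H ≤ 1}`. -/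
def hardyOpNorm {n : ℕ} (a : Fin n → ℝ) (p : Fin n → ℝ≥0∞) (r : ℝ≥0∞) (s : ℕ)
    (L : TDist n → ℂ) : ℝ≥0∞ :=
  ⨆ T ∈ {T : TDist n | MemHardy a p r s T ∧ hardyNorm a p r s T ≤ 1}, (‖L T‖₊ : ℝ≥0∞)

/-- `P = Π_B f` is the natural projection of `f` onto polynomials of degree at most `s`
relative to `B`. -/
def IsProj {n : ℕ} (s : ℕ) (B : Set (Fin n → ℝ)) (f P : (Fin n → ℝ) → ℂ) : Prop :=
  IsPolyDeg s P ∧ ∀ q : (Fin n → ℝ) → ℂ, IsPolyDeg s q →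
    (∫ x in B, P x * q x) = ∫ x in B, f x * q x

/-!
Since every `pᵢ ≤ 1`, the mixed quasi-norm `‖·‖_{L^p⃗}` is superadditive on nonnegative functions
(the reverse Minkowski inequality, applied one variable at a time), and pointwise
`(∑ bᵢ ^ p₋) ^ (1 / p₋) ≥ ∑ bᵢ`. For `bᵢ = |λᵢ| χ_{Bᵢ} / ‖χ_{Bᵢ}‖_{L^p⃗}` this gives
`∑ |λᵢ| ≤ ‖{∑ bᵢ ^ p₋} ^ (1 / p₋)‖_{L^p⃗}`, so it suffices to bound `|∫ a g|` by the Campanato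
norm of `g` for a single atom `a` supported on `B`. The vanishing moments of `a` let us replace
`g` by `g - P` for any polynomial `P` of degree at most `s`, and Hölder's inequality together
with the size condition on `a` gives
`|∫ a g| ≤ |B| / ‖χ_B‖_{L^p⃗} · (|B|⁻¹ ∫_B |g - P| ^ r') ^ (1 / r')`.
-/

namespace ENNReal

theorem finsetSum_le_rpow_finsetSum_rpow {ι : Type*} {θ : ℝ} (hθ0 : 0 < θ) (hθ1 : θ ≤ 1)
    (s : Finset ι) (b : ι → ℝ≥0∞) : ∑ i ∈ s, b i ≤ (∑ i ∈ s, b i ^ θ) ^ (1 / θ) := by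
  rw [one_div, le_rpow_inv_iff hθ0]
  induction s using Finset.cons_induction with
  | empty => simp [zero_rpow_of_pos hθ0]
  | cons j s hj ih =>
    rw [Finset.sum_cons, Finset.sum_cons]
    exact (rpow_add_le_add_rpow _ _ hθ0.le hθ1).trans (add_le_add_right ih _)

variable {α : Type*} [MeasurableSpace α] {μ : Measure α} {p : ℝ}

theorem rpow_eq_mul_rpow_mul_rpow_of_le (hp0 : 0 < p) {h k : ℝ≥0∞} (hhk : h ≤ k)
    (hk : k ≠ ∞) : h ^ p = (h * k ^ (p - 1)) ^ p * (k ^ p) ^ (1 - p) := by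
  rcases eq_or_ne k 0 with rfl | hk0
  · simp [nonpos_iff_eq_zero.mp hhk, zero_rpow_of_pos hp0]
  rw [mul_rpow_of_nonneg _ _ hp0.le, ← rpow_mul, ← rpow_mul, mul_assoc, ← rpow_add _ _ hk0 hk,
    show (p - 1) * p + p * (1 - p) = 0 by ring, rpow_zero, mul_one]

theorem lintegral_rpow_le_of_ae_le (hp0 : 0 < p) (hp1 : p ≤ 1) {h k : α → ℝ≥0∞}
    (hh : AEMeasurable h μ) (hk : AEMeasurable k μ) (hhk : ∀ᵐ x ∂μ, h x ≤ k x)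
    (hk_top : ∀ᵐ x ∂μ, k x ≠ ∞) :
    ∫⁻ x, h x ^ p ∂μ ≤ (∫⁻ x, h x * k x ^ (p - 1) ∂μ) ^ p * (∫⁻ x, k x ^ p ∂μ) ^ (1 - p) :=
  calc ∫⁻ x, h x ^ p ∂μ = ∫⁻ x, (h x * k x ^ (p - 1)) ^ p * (k x ^ p) ^ (1 - p) ∂μ := by
        refine lintegral_congr_ae ?_
        filter_upwards [hhk, hk_top] with x hx hx'
        exact rpow_eq_mul_rpow_mul_rpow_of_le hp0 hx hx'
    _ ≤ _ := lintegral_mul_norm_pow_le (hh.mul (hk.pow_const _)) (hk.pow_const _) hp0.le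
        (by linarith) (by ring)

theorem lintegral_Lp_add_lintegral_Lp_le (hp0 : 0 < p) (hp1 : p ≤ 1) {f g : α → ℝ≥0∞}
    (hf : AEMeasurable f μ) (hg : AEMeasurable g μ) :
    (∫⁻ x, f x ^ p ∂μ) ^ (1 / p) + (∫⁻ x, g x ^ p ∂μ) ^ (1 / p) ≤
      (∫⁻ x, (f x + g x) ^ p ∂μ) ^ (1 / p) := by
  set T := ∫⁻ x, (f x + g x) ^ p ∂μ
  rcases eq_or_ne T ∞ with hT | hT
  · rw [hT, top_rpow_of_pos (one_div_pos.mpr hp0)]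
    exact le_top
  have hfg : AEMeasurable (fun x => f x + g x) μ := hf.add hg
  have hfin : ∀ᵐ x ∂μ, f x + g x ≠ ∞ := by
    filter_upwards [ae_lt_top' (hfg.pow_const p) hT] with x hx
    exact fun h => by simp [h, top_rpow_of_pos hp0] at hx
  -- Hölder's inequality for the exponents `1 / p` and `1 / (1 - p)`, against the weight
  -- `(f + g) ^ (p - 1)`; summing the bounds for `h = f` and `h = g` then recovers `T`.
  have key : ∀ h : α → ℝ≥0∞, AEMeasurable h μ → (∀ x, h x ≤ f x + g x) →
      (∫⁻ x, h x ^ p ∂μ) ^ (1 / p) ≤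
        (∫⁻ x, h x * (f x + g x) ^ (p - 1) ∂μ) * T ^ (1 / p - 1) := by
    intro h hh hle
    refine (rpow_le_rpow (lintegral_rpow_le_of_ae_le hp0 hp1 hh hfg (ae_of_all _ hle) hfin)
      (one_div_pos.mpr hp0).le).trans_eq ?_
    rw [mul_rpow_of_nonneg _ _ (one_div_pos.mpr hp0).le, ← rpow_mul, ← rpow_mul,
      mul_one_div_cancel hp0.ne', rpow_one]
    congr 2
    field_simp
  calc (∫⁻ x, f x ^ p ∂μ) ^ (1 / p) + (∫⁻ x, g x ^ p ∂μ) ^ (1 / p)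
      ≤ (∫⁻ x, f x * (f x + g x) ^ (p - 1) ∂μ) * T ^ (1 / p - 1) +
        (∫⁻ x, g x * (f x + g x) ^ (p - 1) ∂μ) * T ^ (1 / p - 1) :=
      add_le_add (key f hf fun x => le_self_add) (key g hg fun x => le_add_self)
    _ = (∫⁻ x, (f x + g x) * (f x + g x) ^ (p - 1) ∂μ) * T ^ (1 / p - 1) := by
      rw [← add_mul, ← lintegral_add_left' (f := fun x => f x * (f x + g x) ^ (p - 1))
        (hf.mul (hfg.pow_const _))]
      simp_rw [add_mul]
    _ = T * T ^ (1 / p - 1) := by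
      congr 1
      refine lintegral_congr_ae ?_
      filter_upwards [hfin] with x hx
      rcases eq_or_ne (f x + g x) 0 with h0 | h0
      · simp [h0, zero_rpow_of_pos hp0]
      · nth_rw 1 [← rpow_one (f x + g x)]
        rw [← rpow_add _ _ h0 hx, add_sub_cancel]
    _ = T ^ (1 / p) := by
      nth_rw 1 [← rpow_one T]
      rw [← rpow_add_of_nonneg _ _ zero_le_one (sub_nonneg.mpr (one_le_one_div hp0 hp1)),
        add_sub_cancel]

theorem rpow_mul_rpow_eq_mul_inv_mul_rpow {V L : ℝ≥0∞} (hV0 : V ≠ 0) (hV_top : V ≠ ∞)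
    {c₁ c₂ : ℝ} (hc₂ : 0 ≤ c₂) (hc : c₁ + c₂ = 1) :
    V ^ c₁ * L ^ c₂ = V * (V⁻¹ * L) ^ c₂ := by
  rw [mul_rpow_of_nonneg _ _ hc₂, inv_rpow, ← mul_assoc, ← div_eq_mul_inv]
  nth_rw 2 [← rpow_one V]
  rw [← rpow_sub _ _ hV0 hV_top, ← eq_sub_of_add_eq hc]

theorem HolderConjugate.toReal_one_div_add_one_div_toReal (r r' : ℝ≥0∞) [r.HolderConjugate r'] :
    (1 / r).toReal + 1 / r'.toReal = 1 := by
  have := congrArg ENNReal.toReal (HolderConjugate.inv_add_inv_eq_one r r')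
  rw [toReal_add (inv_ne_top.2 (HolderConjugate.ne_zero r r'))
    (inv_ne_top.2 (HolderConjugate.ne_zero r' r)), toReal_inv r', toReal_one] at this
  simpa only [one_div] using this

end ENNReal

section MixedNorm

lemma measurable_fin_cons {n : ℕ} :
    Measurable fun z : ℝ × (Fin n → ℝ) => (Fin.cons z.1 z.2 : Fin (n + 1) → ℝ) :=
  measurable_pi_lambda _ fun i =>
    Fin.cases measurable_fst (fun j => (measurable_pi_apply j).comp measurable_snd) i

lemma measurable_lintegral_fin_cons_rpow {n : ℕ} (q : ℝ) {f : (Fin (n + 1) → ℝ) → ℝ≥0∞}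
    (hf : Measurable f) :
    Measurable fun y : Fin n → ℝ => (∫⁻ t, f (Fin.cons t y) ^ q) ^ (1 / q) :=
  Measurable.pow_const
    ((hf.comp (measurable_fin_cons.comp measurable_swap)).pow_const q).lintegral_prod_right' _

lemma mixedNormF_mono {n : ℕ} (p : Fin n → ℝ≥0∞) {f g : (Fin n → ℝ) → ℝ≥0∞} (h : f ≤ g) :
    mixedNormF p f ≤ mixedNormF p g := by
  induction n with
  | zero => exact h _
  | succ n ih =>
    refine ih _ fun y => ?_
    split_ifs
    · exact essSup_mono_ae (ae_of_all _ fun t => h _)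
    · gcongr with t
      exact h _

lemma mixedNormF_const_mul {n : ℕ} {p : Fin n → ℝ≥0∞} (hp0 : ∀ i, p i ≠ 0) (hp_top : ∀ i, p i ≠ ∞)
    {c : ℝ≥0∞} (hc : c ≠ ∞) (f : (Fin n → ℝ) → ℝ≥0∞) :
    mixedNormF p (fun x => c * f x) = c * mixedNormF p f := by
  induction n with
  | zero => rfl
  | succ n ih =>
    have hq : 0 < (p 0).toReal := ENNReal.toReal_pos (hp0 0) (hp_top 0)
    simp only [mixedNormF, if_neg (hp_top 0)]
    rw [← ih (fun i => hp0 i.succ) (fun i => hp_top i.succ)]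
    congr 1
    funext y
    simp_rw [ENNReal.mul_rpow_of_nonneg _ _ hq.le]
    rw [lintegral_const_mul' _ _ (ENNReal.rpow_ne_top_of_nonneg hq.le hc),
      ENNReal.mul_rpow_of_nonneg _ _ (by positivity), ← ENNReal.rpow_mul,
      mul_one_div_cancel hq.ne', ENNReal.rpow_one]

lemma mixedNormF_add_le {n : ℕ} {p : Fin n → ℝ≥0∞} (hp0 : ∀ i, p i ≠ 0) (hp1 : ∀ i, p i ≤ 1)
    {f g : (Fin n → ℝ) → ℝ≥0∞} (hf : Measurable f) (hg : Measurable g) :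
    mixedNormF p f + mixedNormF p g ≤ mixedNormF p (f + g) := by
  induction n with
  | zero => rfl
  | succ n ih =>
    have hp_top : p 0 ≠ ∞ := ne_top_of_le_ne_top ENNReal.one_ne_top (hp1 0)
    have hq0 : 0 < (p 0).toReal := ENNReal.toReal_pos (hp0 0) hp_top
    have hq1 : (p 0).toReal ≤ 1 := ENNReal.toReal_le_of_le_ofReal zero_le_one (by simpa using hp1 0)
    simp only [mixedNormF, if_neg hp_top]
    refine (ih (fun i => hp0 i.succ) (fun i => hp1 i.succ)
      (measurable_lintegral_fin_cons_rpow _ hf) (measurable_lintegral_fin_cons_rpow _ hg)).trans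
      (mixedNormF_mono _ fun y => ?_)
    exact ENNReal.lintegral_Lp_add_lintegral_Lp_le hq0 hq1
      (hf.comp (measurable_fin_cons.comp (measurable_id.prodMk measurable_const))).aemeasurable
      (hg.comp (measurable_fin_cons.comp (measurable_id.prodMk measurable_const))).aemeasurable

lemma finsetSum_mixedNormF_le {n : ℕ} {p : Fin n → ℝ≥0∞} (hp0 : ∀ i, p i ≠ 0)
    (hp1 : ∀ i, p i ≤ 1) {ι : Type*} (s : Finset ι) {F : ι → (Fin n → ℝ) → ℝ≥0∞}
    (hF : ∀ i, Measurable (F i)) :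
    ∑ i ∈ s, mixedNormF p (F i) ≤ mixedNormF p (fun x => ∑ i ∈ s, F i x) := by
  induction s using Finset.cons_induction with
  | empty => exact zero_le
  | cons j s hj ih =>
    simp only [Finset.sum_cons]
    exact (add_le_add le_rfl ih).trans
      (mixedNormF_add_le hp0 hp1 (hF j) (Finset.measurable_sum s fun i _ => hF i))

lemma Fin.cons_mem_univ_pi {n : ℕ} {S : Fin (n + 1) → Set ℝ} {t : ℝ} {y : Fin n → ℝ} :
    (Fin.cons t y : Fin (n + 1) → ℝ) ∈ Set.univ.pi S ↔
      t ∈ S 0 ∧ y ∈ Set.univ.pi fun j => S j.succ := by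
  simp only [Set.mem_univ_pi, Fin.forall_fin_succ, Fin.cons_zero, Fin.cons_succ]

lemma chiNorm_mono {n : ℕ} (p : Fin n → ℝ≥0∞) {S T : Set (Fin n → ℝ)} (h : S ⊆ T) :
    chiNorm p S ≤ chiNorm p T :=
  mixedNormF_mono p (Set.indicator_le_indicator_of_subset h fun _ => zero_le)

lemma lintegral_indicator_univ_pi_fin_cons_rpow {n : ℕ} {S : Fin (n + 1) → Set ℝ}
    (hS : MeasurableSet (S 0)) {q : ℝ} (hq : 0 < q) (y : Fin n → ℝ) :
    (∫⁻ t, (Set.univ.pi S).indicator (fun _ => 1) (Fin.cons t y) ^ q) ^ (1 / q) =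
      volume (S 0) ^ (1 / q) * (Set.univ.pi fun j => S j.succ).indicator (fun _ => 1) y := by
  by_cases hy : y ∈ Set.univ.pi fun j => S j.succ
  · have hcons (t : ℝ) : (Set.univ.pi S).indicator (fun _ => (1 : ℝ≥0∞)) (Fin.cons t y) ^ q =
        (S 0).indicator (fun _ => 1) t := by
      by_cases ht : t ∈ S 0
      · simp [Set.indicator_of_mem (Fin.cons_mem_univ_pi.2 ⟨ht, hy⟩), ht]
      · simp [Set.indicator_of_notMem (fun h => ht (Fin.cons_mem_univ_pi.1 h).1), ht, hq]
    simp only [hcons, lintegral_indicator_const hS, one_mul, Set.indicator_of_mem hy, mul_one]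
  · have hcons (t : ℝ) : (Set.univ.pi S).indicator (fun _ => (1 : ℝ≥0∞)) (Fin.cons t y) = 0 :=
      Set.indicator_of_notMem (fun h => hy (Fin.cons_mem_univ_pi.1 h).2) _
    simp [hcons, Set.indicator_of_notMem hy, hq]

lemma chiNorm_univ_pi {n : ℕ} {p : Fin n → ℝ≥0∞} (hp0 : ∀ i, p i ≠ 0)
    (hp_top : ∀ i, p i ≠ ∞) {S : Fin n → Set ℝ} (hS : ∀ i, MeasurableSet (S i))
    (hS_fin : ∀ i, volume (S i) ≠ ∞) :
    chiNorm p (Set.univ.pi S) = ∏ i, volume (S i) ^ (1 / (p i).toReal) := by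
  induction n with
  | zero => simp [chiNorm, mixedNormF]
  | succ n ih =>
    have hq : 0 < (p 0).toReal := ENNReal.toReal_pos (hp0 0) (hp_top 0)
    simp only [chiNorm, mixedNormF, if_neg (hp_top 0),
      lintegral_indicator_univ_pi_fin_cons_rpow (hS 0) hq]
    rw [mixedNormF_const_mul (fun i => hp0 i.succ) (fun i => hp_top i.succ)
      (ENNReal.rpow_ne_top_of_nonneg (by positivity) (hS_fin 0)), ← chiNorm,
      ih (fun i => hp0 i.succ) (fun i => hp_top i.succ) (fun i => hS i.succ)
      (fun i => hS_fin i.succ), Fin.prod_univ_succ]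

end MixedNorm

lemma toReal_pMinE_mem_Ioc {n : ℕ} (hn : 0 < n) {p : Fin n → ℝ≥0∞} (hp0 : ∀ i, p i ≠ 0)
    (hp1 : ∀ i, p i ≤ 1) : (pMinE p).toReal ∈ Set.Ioc 0 1 := by
  have : Nonempty (Fin n) := Fin.pos_iff_nonempty.mp hn
  obtain ⟨j, hj⟩ := exists_eq_ciInf_of_finite (f := p)
  rw [pMinE, ← hj]
  exact ⟨ENNReal.toReal_pos (hp0 j) (ne_top_of_le_ne_top ENNReal.one_ne_top (hp1 j)),
    ENNReal.toReal_le_of_le_ofReal zero_le_one (by simpa using hp1 j)⟩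

lemma sum_nnnorm_le_atomFinNorm {n m : ℕ} (hn : 0 < n) {p : Fin n → ℝ≥0∞}
    (hp0 : ∀ i, p i ≠ 0) (hp1 : ∀ i, p i ≤ 1) (lam : Fin m → ℂ) {B : Fin m → Set (Fin n → ℝ)}
    (hB : ∀ i, MeasurableSet (B i)) (hB0 : ∀ i, chiNorm p (B i) ≠ 0)
    (hB_top : ∀ i, chiNorm p (B i) ≠ ∞) :
    ∑ i, (‖lam i‖₊ : ℝ≥0∞) ≤ atomFinNorm p lam B := by
  have hp_top (i : Fin n) : p i ≠ ∞ := ne_top_of_le_ne_top ENNReal.one_ne_top (hp1 i)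
  obtain ⟨hθ0, hθ1⟩ := toReal_pMinE_mem_Ioc hn hp0 hp1
  set F : Fin m → (Fin n → ℝ) → ℝ≥0∞ := fun i x =>
    (‖lam i‖₊ : ℝ≥0∞) * (B i).indicator (fun _ => 1) x / chiNorm p (B i)
  have hF (i : Fin m) : mixedNormF p (F i) = ‖lam i‖₊ := by
    have : F i = fun x => (‖lam i‖₊ / chiNorm p (B i)) * (B i).indicator (fun _ => 1) x := by
      funext x
      simp only [F, div_eq_mul_inv, mul_right_comm]
    rw [this, mixedNormF_const_mul hp0 hp_top (ENNReal.div_ne_top ENNReal.coe_ne_top (hB0 i)),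
      ← chiNorm, ENNReal.div_mul_cancel (hB0 i) (hB_top i)]
  calc ∑ i, (‖lam i‖₊ : ℝ≥0∞) = ∑ i, mixedNormF p (F i) := by simp only [hF]
    _ ≤ mixedNormF p (fun x => ∑ i, F i x) :=
      finsetSum_mixedNormF_le hp0 hp1 _ fun i =>
        ((measurable_const.indicator (hB i)).const_mul _).div_const _
    _ ≤ atomFinNorm p lam B :=
      mixedNormF_mono p fun x => ENNReal.finsetSum_le_rpow_finsetSum_rpow hθ0 hθ1 _ _

section AnisotropicBall

variable {n : ℕ} {a : Fin n → ℝ}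

lemma strictAntiOn_sum_div_rpow (ha : ∀ i, 0 < a i) {z : Fin n → ℝ} (hz : z ≠ 0) :
    StrictAntiOn (fun t : ℝ => ∑ i, z i ^ 2 / t ^ (2 * a i)) (Set.Ioi 0) := by
  intro s (hs : 0 < s) t _ hst
  obtain ⟨j, hj⟩ := Function.ne_iff.mp hz
  refine Finset.sum_lt_sum (fun i _ => ?_) ⟨j, Finset.mem_univ _, ?_⟩
  · have := ha i
    gcongr
  · have := ha j
    have : 0 < z j ^ 2 := pow_two_pos_of_ne_zero hj
    gcongr

lemma exists_sum_div_rpow_eq_one (ha : ∀ i, 1 ≤ a i) {z : Fin n → ℝ} (hz : z ≠ 0) :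
    ∃ t, 0 < t ∧ ∑ i, z i ^ 2 / t ^ (2 * a i) = 1 := by
  set φ : ℝ → ℝ := fun t => ∑ i, z i ^ 2 / t ^ (2 * a i)
  set M := ∑ i, z i ^ 2
  obtain ⟨j, hj⟩ := Function.ne_iff.mp hz
  have hM : 0 < M := Finset.sum_pos' (fun i _ => sq_nonneg _)
    ⟨j, Finset.mem_univ _, pow_two_pos_of_ne_zero hj⟩
  have hφ : ContinuousOn φ (Set.Ioi 0) := continuousOn_finsetSum _ fun i _ =>
    continuousOn_const.div (fun t ht => (Real.continuousAt_rpow_const _ _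
      (Or.inl (ne_of_gt ht))).continuousWithinAt) fun t ht => (Real.rpow_pos_of_pos ht _).ne'
  have hφ_ge {t : ℝ} (ht0 : 0 < t) (ht1 : t ≤ 1) : M / t ^ (2 : ℝ) ≤ φ t := by
    rw [Finset.sum_div]
    refine Finset.sum_le_sum fun i _ => ?_
    exact div_le_div_of_nonneg_left (sq_nonneg _) (by positivity)
      (Real.rpow_le_rpow_of_exponent_ge ht0 ht1 (by linarith [ha i]))
  have hφ_le {t : ℝ} (ht : 1 ≤ t) : φ t ≤ M / t ^ (2 : ℝ) := by
    rw [Finset.sum_div]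
    refine Finset.sum_le_sum fun i _ => ?_
    exact div_le_div_of_nonneg_left (sq_nonneg _) (by positivity)
      (Real.rpow_le_rpow_of_exponent_le ht (by linarith [ha i]))
  set t₁ := min 1 √M
  set t₂ := max 1 √M
  have ht₁ : 0 < t₁ := lt_min one_pos (Real.sqrt_pos.mpr hM)
  have h₁ : 1 ≤ φ t₁ := by
    refine le_trans ?_ (hφ_ge ht₁ (min_le_left _ _))
    rw [one_le_div (by positivity), Real.rpow_two]
    calc t₁ ^ 2 ≤ √M ^ 2 := by gcongr; exact min_le_right _ _
      _ = M := Real.sq_sqrt hM.le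
  have h₂ : φ t₂ ≤ 1 := by
    refine (hφ_le (le_max_left _ _)).trans ?_
    rw [div_le_one (by positivity), Real.rpow_two]
    calc M = √M ^ 2 := (Real.sq_sqrt hM.le).symm
      _ ≤ t₂ ^ 2 := by gcongr; exact le_max_right _ _
  obtain ⟨t, ht, hφt⟩ := intermediate_value_Icc' min_le_max
    (hφ.mono fun t ht => ht₁.trans_le ht.1) ⟨h₂, h₁⟩
  exact ⟨t, ht₁.trans_le ht.1, hφt⟩

lemma anorm_lt_iff (ha : ∀ i, 1 ≤ a i) {r : ℝ} (hr : 0 < r) (z : Fin n → ℝ) :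
    anorm a z < r ↔ ∑ i, z i ^ 2 / r ^ (2 * a i) < 1 := by
  rcases eq_or_ne z 0 with rfl | hz
  · simp [anorm, hr]
  obtain ⟨t₀, ht₀, hφt₀⟩ := exists_sum_div_rpow_eq_one ha hz
  have hanti := strictAntiOn_sum_div_rpow (fun i => one_pos.trans_le (ha i)) hz
  have hanorm : anorm a z = t₀ := by
    rw [anorm, ← csInf_singleton t₀]
    congr 1
    ext t
    exact ⟨fun ⟨ht, hφt⟩ => hanti.injOn ht ht₀ (hφt.trans hφt₀.symm),
      by rintro rfl; exact ⟨ht₀, hφt₀⟩⟩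
  rw [hanorm, ← hφt₀]
  exact (hanti.lt_iff_gt hr ht₀).symm

lemma aball_eq (ha : ∀ i, 1 ≤ a i) (x : Fin n → ℝ) {r : ℝ} (hr : 0 < r) :
    aball a x r = {y | ∑ i, (y i - x i) ^ 2 / r ^ (2 * a i) < 1} := by
  ext y
  exact anorm_lt_iff ha hr _

lemma rpow_two_mul_eq_sq {r : ℝ} (hr : 0 < r) (b : ℝ) : r ^ (2 * b) = (r ^ b) ^ 2 := by
  rw [mul_comm, Real.rpow_mul hr.le, Real.rpow_two]

variable {x : Fin n → ℝ} {r : ℝ}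

lemma aball_subset_pi_Ioo (ha : ∀ i, 1 ≤ a i) (hr : 0 < r) :
    aball a x r ⊆ Set.univ.pi fun i => Set.Ioo (x i - r ^ a i) (x i + r ^ a i) := by
  rw [aball_eq ha x hr]
  intro y (hy : ∑ j, (y j - x j) ^ 2 / r ^ (2 * a j) < 1) i _
  have hterm : (y i - x i) ^ 2 / r ^ (2 * a i) < 1 :=
    (Finset.single_le_sum (f := fun j => (y j - x j) ^ 2 / r ^ (2 * a j))
      (fun j _ => by positivity) (Finset.mem_univ i)).trans_lt hy
  rw [rpow_two_mul_eq_sq hr, div_lt_one (by positivity)] at hterm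
  have := abs_lt_of_sq_lt_sq' hterm (by positivity)
  constructor <;> linarith [this.1, this.2]

lemma pi_Ioo_subset_aball (ha : ∀ i, 1 ≤ a i) (hr : 0 < r) :
    (Set.univ.pi fun i => Set.Ioo (x i - r ^ a i / (n + 1)) (x i + r ^ a i / (n + 1))) ⊆
      aball a x r := by
  rw [aball_eq ha x hr]
  intro y hy
  have hterm (i : Fin n) : (y i - x i) ^ 2 / r ^ (2 * a i) ≤ 1 / (n + 1) ^ 2 := by
    obtain ⟨h₁, h₂⟩ := hy i (Set.mem_univ i)
    have : (y i - x i) ^ 2 ≤ (r ^ a i / (n + 1)) ^ 2 :=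
      sq_le_sq' (by linarith) (by linarith)
    rw [rpow_two_mul_eq_sq hr, div_le_iff₀ (by positivity)]
    calc (y i - x i) ^ 2 ≤ (r ^ a i / (n + 1)) ^ 2 := this
      _ = 1 / (n + 1) ^ 2 * (r ^ a i) ^ 2 := by rw [div_pow, one_div_mul_eq_div]
  calc ∑ i, (y i - x i) ^ 2 / r ^ (2 * a i) ≤ ∑ _i : Fin n, 1 / ((n : ℝ) + 1) ^ 2 :=
        Finset.sum_le_sum fun i _ => hterm i
    _ = n / ((n : ℝ) + 1) ^ 2 := by simp [div_eq_mul_inv]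
    _ < 1 := by
        rw [div_lt_one (by positivity)]
        nlinarith

lemma measurableSet_aball (ha : ∀ i, 1 ≤ a i) (hr : 0 < r) :
    MeasurableSet (aball a x r) := by
  rw [aball_eq ha x hr]
  exact measurableSet_lt (Finset.measurable_sum _ fun i _ =>
    (((measurable_pi_apply i).sub measurable_const).pow_const 2).div_const _) measurable_const

lemma isBounded_aball (ha : ∀ i, 1 ≤ a i) (hr : 0 < r) : Bornology.IsBounded (aball a x r) :=
  ((isCompact_univ_pi fun _ => isCompact_Icc).isBounded).subset
    ((aball_subset_pi_Ioo ha hr).trans (Set.pi_mono fun _ _ => Set.Ioo_subset_Icc_self))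

lemma volume_aball_ne_zero (ha : ∀ i, 1 ≤ a i) (hr : 0 < r) : volume (aball a x r) ≠ 0 := by
  refine (lt_of_lt_of_le ?_ (measure_mono (pi_Ioo_subset_aball ha hr))).ne'
  rw [volume_pi_pi, CanonicallyOrderedAdd.prod_pos]
  intro i _
  rw [Real.volume_Ioo, ENNReal.ofReal_pos]
  have : 0 < r ^ a i / (n + 1) := by positivity
  linarith

lemma volume_aball_ne_top (ha : ∀ i, 1 ≤ a i) (hr : 0 < r) : volume (aball a x r) ≠ ∞ :=
  (isBounded_aball ha hr).measure_lt_top.ne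

lemma chiNorm_aball_ne_zero {p : Fin n → ℝ≥0∞} (ha : ∀ i, 1 ≤ a i) (hp0 : ∀ i, p i ≠ 0)
    (hp_top : ∀ i, p i ≠ ∞) (hr : 0 < r) : chiNorm p (aball a x r) ≠ 0 := by
  have h := chiNorm_mono p (pi_Ioo_subset_aball (x := x) ha hr)
  rw [chiNorm_univ_pi hp0 hp_top (fun _ => measurableSet_Ioo) (fun _ => by simp)] at h
  refine (lt_of_lt_of_le ?_ h).ne'
  rw [CanonicallyOrderedAdd.prod_pos]
  intro i _
  refine ENNReal.rpow_pos ?_ (by simp)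
  rw [Real.volume_Ioo, ENNReal.ofReal_pos]
  have : 0 < r ^ a i / (n + 1) := by positivity
  linarith

lemma chiNorm_aball_ne_top {p : Fin n → ℝ≥0∞} (ha : ∀ i, 1 ≤ a i) (hp0 : ∀ i, p i ≠ 0)
    (hp_top : ∀ i, p i ≠ ∞) (hr : 0 < r) : chiNorm p (aball a x r) ≠ ∞ := by
  have h := chiNorm_mono p (aball_subset_pi_Ioo (x := x) ha hr)
  rw [chiNorm_univ_pi hp0 hp_top (fun _ => measurableSet_Ioo) (fun _ => by simp)] at h
  refine ne_top_of_le_ne_top ?_ h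
  exact ENNReal.prod_ne_top fun i _ => ENNReal.rpow_ne_top_of_nonneg (by positivity) (by simp)

end AnisotropicBall

theorem MeasureTheory.IntegrableOn.integrable_mul_continuous {X : Type*} [MetricSpace X]
    [ProperSpace X] [MeasurableSpace X] [OpensMeasurableSpace X] {μ : Measure X} {f g : X → ℂ}
    {B : Set X} (hf : IntegrableOn f B μ) (hB : MeasurableSet B) (hB_bdd : Bornology.IsBounded B)
    (hf_supp : Function.support f ⊆ B) (hg : Continuous g) :
    Integrable (fun x => f x * g x) μ :=
  (integrableOn_iff_integrable_of_support_subset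
    ((Function.support_mul_subset_left _ _).trans hf_supp)).mp
    (hf.mul_continuousOn_of_subset hg.continuousOn hB hB_bdd.isCompact_closure subset_closure)

lemma IsPolyDeg.continuous {n s : ℕ} {P : (Fin n → ℝ) → ℂ} (hP : IsPolyDeg s P) :
    Continuous P := by
  obtain ⟨Q, -, hQ⟩ := hP
  rw [funext hQ]
  exact Q.continuous_eval.comp
    (continuous_pi fun i => Complex.continuous_ofReal.comp (continuous_apply i))

lemma integral_mul_eq_zero_of_isPolyDeg {n s : ℕ} {f P : (Fin n → ℝ) → ℂ}
    (hint : ∀ α : Fin n → ℕ, Integrable fun x => f x * ∏ i, (x i : ℂ) ^ α i)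
    (hmom : ∀ α : Fin n → ℕ, ∑ i, α i ≤ s → ∫ x, f x * ∏ i, (x i : ℂ) ^ α i = 0)
    (hP : IsPolyDeg s P) : ∫ x, f x * P x = 0 := by
  obtain ⟨Q, hQ_deg, hQ⟩ := hP
  have hexpand (x : Fin n → ℝ) : f x * P x =
      ∑ d ∈ Q.support, Q.coeff d * (f x * ∏ i, (x i : ℂ) ^ d i) := by
    rw [hQ, MvPolynomial.eval_eq', Finset.mul_sum]
    exact Finset.sum_congr rfl fun d _ => by ring
  simp_rw [hexpand]
  rw [integral_finsetSum (f := fun d x => Q.coeff d * (f x * ∏ i, (x i : ℂ) ^ d i)) _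
    fun d _ => (hint d).const_mul _]
  refine Finset.sum_eq_zero fun d hd => ?_
  have hd_deg : ∑ i, d i ≤ s :=
    le_trans (by simpa [Finsupp.sum_fintype] using MvPolynomial.le_totalDegree hd) hQ_deg
  rw [integral_const_mul, hmom (fun i => d i) hd_deg, mul_zero]

namespace IsAtomFn

variable {n : ℕ} {a : Fin n → ℝ} {p : Fin n → ℝ≥0∞} {r r' : ℝ≥0∞} {s : ℕ}
  {A g : (Fin n → ℝ) → ℂ} {B : Set (Fin n → ℝ)}

lemma memLp (hA : IsAtomFn a p r s A B) (hB_top : volume B ≠ ∞) (hB : chiNorm p B ≠ 0) :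
    MemLp A r volume :=
  ⟨hA.measurable.aestronglyMeasurable, hA.size.trans_lt
    (ENNReal.div_lt_top (ENNReal.rpow_ne_top_of_nonneg ENNReal.toReal_nonneg hB_top) hB)⟩

lemma integrable_mul_continuous (hA : IsAtomFn a p r s A B) (ha : ∀ i, 1 ≤ a i)
    (hp0 : ∀ i, p i ≠ 0) (hp_top : ∀ i, p i ≠ ∞) (hr : 1 ≤ r)
    {φ : (Fin n → ℝ) → ℂ} (hφ : Continuous φ) : Integrable (fun x => A x * φ x) := by
  obtain ⟨x₀, ρ, hρ, rfl⟩ := hA.ball_mem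
  have := isFiniteMeasure_restrict.mpr (volume_aball_ne_top (x := x₀) ha hρ)
  have hAB : IntegrableOn A (aball a x₀ ρ) :=
    ((hA.memLp (volume_aball_ne_top ha hρ) (chiNorm_aball_ne_zero ha hp0 hp_top hρ)).restrict
      _).integrable hr
  exact hAB.integrable_mul_continuous (measurableSet_aball ha hρ) (isBounded_aball ha hρ)
    hA.support_subset hφ

lemma integral_mul_isPolyDeg (hA : IsAtomFn a p r s A B) (ha : ∀ i, 1 ≤ a i)
    (hp0 : ∀ i, p i ≠ 0) (hp_top : ∀ i, p i ≠ ∞) (hr : 1 ≤ r) {P : (Fin n → ℝ) → ℂ}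
    (hP : IsPolyDeg s P) : ∫ x, A x * P x = 0 :=
  integral_mul_eq_zero_of_isPolyDeg
    (fun _ => hA.integrable_mul_continuous ha hp0 hp_top hr (by fun_prop)) hA.moments hP

lemma integrable_mul (hA : IsAtomFn a p r s A B) (ha : ∀ i, 1 ≤ a i) (hp0 : ∀ i, p i ≠ 0)
    (hp_top : ∀ i, p i ≠ ∞) [r.HolderConjugate r'] (hg : MemLp g r' (volume.restrict B)) :
    Integrable (fun x => A x * g x) := by
  obtain ⟨x₀, ρ, hρ, rfl⟩ := hA.ball_mem
  have hAr := hA.memLp (volume_aball_ne_top ha hρ) (chiNorm_aball_ne_zero ha hp0 hp_top hρ)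
  exact (integrableOn_iff_integrable_of_support_subset
    ((Function.support_mul_subset_left _ _).trans hA.support_subset)).mp
    (memLp_one_iff_integrable.mp (hg.mul' (hAr.restrict _)))

lemma memLp_restrict_of_locLp (hA : IsAtomFn a p r s A B) (ha : ∀ i, 1 ≤ a i) {q : ℝ≥0∞}
    (hg : LocLp q g) : MemLp g q (volume.restrict B) := by
  obtain ⟨x₀, ρ, hρ, rfl⟩ := hA.ball_mem
  exact (hg _ (isBounded_aball ha hρ).isCompact_closure).mono_measure
    (Measure.restrict_mono subset_closure le_rfl)

lemma nnnorm_integral_mul_le (hA : IsAtomFn a p r s A B) (ha : ∀ i, 1 ≤ a i)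
    (hp0 : ∀ i, p i ≠ 0) (hp_top : ∀ i, p i ≠ ∞) (hr : r ≠ 1) [hrr' : r.HolderConjugate r']
    (hg : MemLp g r' (volume.restrict B)) {P : (Fin n → ℝ) → ℂ} (hP : IsPolyDeg s P) :
    (‖∫ x, A x * g x‖₊ : ℝ≥0∞) ≤ volume B / chiNorm p B *
      ((volume B)⁻¹ * ∫⁻ x in B, (‖g x - P x‖₊ : ℝ≥0∞) ^ r'.toReal) ^ (1 / r'.toReal) := by
  obtain ⟨x₀, ρ, hρ, rfl⟩ := hA.ball_mem
  set B := aball a x₀ ρ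
  have hr_one : 1 ≤ r := ENNReal.HolderConjugate.one_le r r'
  have hr'_top : r' ≠ ∞ := (ENNReal.HolderConjugate.ne_top_iff_ne_one r' r).mpr hr
  have hr'0 : r' ≠ 0 := ENNReal.HolderConjugate.ne_zero r' r
  have hAP := hA.integral_mul_isPolyDeg ha hp0 hp_top hr_one hP
  calc (‖∫ x, A x * g x‖₊ : ℝ≥0∞)
      = ‖∫ x, A x * (g x - P x)‖ₑ := by
        simp_rw [mul_sub]
        rw [integral_sub (hA.integrable_mul ha hp0 hp_top hg)
          (hA.integrable_mul_continuous ha hp0 hp_top hr_one hP.continuous), hAP, sub_zero]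
        rfl
    _ = ‖∫ x in B, A x * (g x - P x)‖ₑ := by
        rw [setIntegral_eq_integral_of_forall_compl_eq_zero fun x hx => by
          rw [Function.notMem_support.mp fun h => hx (hA.support_subset h), zero_mul]]
    _ ≤ eLpNorm (A • fun x => g x - P x) 1 (volume.restrict B) :=
        (enorm_integral_le_lintegral_enorm _).trans_eq eLpNorm_one_eq_lintegral_enorm.symm
    _ ≤ eLpNorm A r (volume.restrict B) * eLpNorm (fun x => g x - P x) r' (volume.restrict B) :=
        eLpNorm_smul_le_mul_eLpNorm (hg.1.sub hP.continuous.aestronglyMeasurable)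
          hA.measurable.aestronglyMeasurable.restrict
    _ ≤ volume B ^ (1 / r).toReal / chiNorm p B *
        (∫⁻ x in B, (‖g x - P x‖₊ : ℝ≥0∞) ^ r'.toReal) ^ (1 / r'.toReal) := by
        rw [eLpNorm_eq_lintegral_rpow_enorm_toReal hr'0 hr'_top]
        simp only [enorm_eq_nnnorm]
        gcongr
        exact (eLpNorm_mono_measure A Measure.restrict_le_self).trans hA.size
    _ = _ := by
        rw [div_eq_mul_inv (volume B ^ _), div_eq_mul_inv (volume B), mul_right_comm,
          mul_right_comm (volume B),
          ENNReal.rpow_mul_rpow_eq_mul_inv_mul_rpow (volume_aball_ne_zero ha hρ)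
            (volume_aball_ne_top ha hρ) (by positivity)
            (ENNReal.HolderConjugate.toReal_one_div_add_one_div_toReal r r')]

lemma nnnorm_integral_mul_le_campanatoNorm (hA : IsAtomFn a p r s A B) (ha : ∀ i, 1 ≤ a i)
    (hp0 : ∀ i, p i ≠ 0) (hp_top : ∀ i, p i ≠ ∞) (hr : r ≠ 1) [r.HolderConjugate r']
    (hg : LocLp r' g) : (‖∫ x, A x * g x‖₊ : ℝ≥0∞) ≤ campanatoNorm a p r' s g := by
  have hr'_top : r' ≠ ∞ := (ENNReal.HolderConjugate.ne_top_iff_ne_one r' r).mpr hr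
  refine le_iSup₂_of_le B hA.ball_mem (le_iInf₂ fun P hP => ?_)
  rw [if_neg hr'_top]
  exact hA.nnnorm_integral_mul_le ha hp0 hp_top hr (hA.memLp_restrict_of_locLp ha hg) hP

end IsAtomFn

lemma nnnorm_integral_sum_mul_le {X ι : Type*} [MeasurableSpace X] {μ : Measure X}
    (s : Finset ι) (lam : ι → ℂ) {A : ι → X → ℂ} {g : X → ℂ}
    (hint : ∀ i ∈ s, Integrable (fun x => A i x * g x) μ) {K : ℝ≥0∞}
    (hK : ∀ i ∈ s, (‖∫ x, A i x * g x ∂μ‖₊ : ℝ≥0∞) ≤ K) :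
    (‖∫ x, (∑ i ∈ s, lam i * A i x) * g x ∂μ‖₊ : ℝ≥0∞) ≤ (∑ i ∈ s, (‖lam i‖₊ : ℝ≥0∞)) * K := by
  have hlin : ∫ x, (∑ i ∈ s, lam i * A i x) * g x ∂μ = ∑ i ∈ s, lam i * ∫ x, A i x * g x ∂μ := by
    simp_rw [Finset.sum_mul, mul_assoc]
    rw [integral_finsetSum _ fun i hi => (hint i hi).const_mul _]
    simp_rw [integral_const_mul]
  rw [hlin, Finset.sum_mul]
  simp only [← enorm_eq_nnnorm]
  refine (enorm_sum_le _ _).trans (Finset.sum_le_sum fun i hi => ?_)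
  rw [enorm_mul]
  gcongr
  simpa only [enorm_eq_nnnorm] using hK i hi

theorem statement0_general {n : ℕ} (hn : 0 < n) (a : Fin n → ℝ) (ha : ∀ i, 1 ≤ a i)
    (p : Fin n → ℝ≥0∞) (hp0 : ∀ i, 0 < p i) (hp1 : ∀ i, p i ≤ 1)
    (r r' : ℝ≥0∞) (hr : 1 < r) (hrr' : 1 / r + 1 / r' = 1) (s : ℕ)
    (g : (Fin n → ℝ) → ℂ) (hg : LocLp r' g)
    (m : ℕ) (lam : Fin m → ℂ) (A : Fin m → (Fin n → ℝ) → ℂ)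
    (B : Fin m → Set (Fin n → ℝ)) (hA : ∀ i, IsAtomFn a p r s (A i) (B i)) :
    (‖∫ x, (∑ i, lam i * A i x) * g x‖₊ : ℝ≥0∞) ≤
      atomFinNorm p lam B * campanatoNorm a p r' s g := by
  have hp0' (i : Fin n) : p i ≠ 0 := (hp0 i).ne'
  have hp_top (i : Fin n) : p i ≠ ∞ := ne_top_of_le_ne_top ENNReal.one_ne_top (hp1 i)
  have : r.HolderConjugate r' :=
    ENNReal.holderConjugate_iff.mpr (by simpa only [one_div] using hrr')
  have hB (i : Fin m) :
      MeasurableSet (B i) ∧ chiNorm p (B i) ≠ 0 ∧ chiNorm p (B i) ≠ ∞ := by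
    obtain ⟨x, ρ, hρ, hBi⟩ := (hA i).ball_mem
    rw [hBi]
    exact ⟨measurableSet_aball ha hρ, chiNorm_aball_ne_zero ha hp0' hp_top hρ,
      chiNorm_aball_ne_top ha hp0' hp_top hρ⟩
  calc (‖∫ x, (∑ i, lam i * A i x) * g x‖₊ : ℝ≥0∞)
      ≤ (∑ i, (‖lam i‖₊ : ℝ≥0∞)) * campanatoNorm a p r' s g :=
        nnnorm_integral_sum_mul_le _ lam
          (fun i _ => (hA i).integrable_mul ha hp0' hp_top ((hA i).memLp_restrict_of_locLp ha hg))
          (fun i _ => (hA i).nnnorm_integral_mul_le_campanatoNorm ha hp0' hp_top hr.ne' hg)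
    _ ≤ atomFinNorm p lam B * campanatoNorm a p r' s g := by
        gcongr
        exact sum_nnnorm_le_atomFinNorm hn hp0' hp1 lam (fun i => (hB i).1) (fun i => (hB i).2.1)
          (fun i => (hB i).2.2)

theorem statement0 {n : ℕ} (hn : 0 < n) (a : Fin n → ℝ) (ha : ∀ i, 1 ≤ a i)
    (p : Fin n → ℝ≥0∞) (hp0 : ∀ i, 0 < p i) (hp1 : ∀ i, p i ≤ 1)
    (r r' : ℝ≥0∞) (hr : 1 < r) (hrr' : 1 / r + 1 / r' = 1) (s : ℕ)
    (hs : ⌊nuTotal a / aMin a * (1 / (pMinE p).toReal - 1)⌋ ≤ (s : ℤ))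
    (g : (Fin n → ℝ) → ℂ) (hg : LocLp r' g) (hgC : campanatoNorm a p r' s g < ∞)
    (m : ℕ) (lam : Fin m → ℂ) (A : Fin m → (Fin n → ℝ) → ℂ)
    (B : Fin m → Set (Fin n → ℝ)) (hA : ∀ i, IsAtomFn a p r s (A i) (B i)) :
    (‖∫ x, (∑ i, lam i * A i x) * g x‖₊ : ℝ≥0∞) ≤
      atomFinNorm p lam B * campanatoNorm a p r' s g :=
  statement0_general hn a ha p hp0 hp1 r r' hr hrr' s g hg m lam A B hA
end
end

section
/- Let $\vec a=(a_1,\dots,a_n)\in[1,\infty)^n$. Then for all $x,y\in\mathbb{R}^n$, $|x+y|_{\vec a}\le|x|_{\vec a}+|y|_{\vec a}$. -/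
open MeasureTheory ENNReal Filter

noncomputable section

/-!
The sum `t ↦ ∑ i, x i ^ 2 / t ^ (2 * a i)` is strictly decreasing, so `|x|_a ≤ r` exactly when
it is at most `1` at `t = r`, i.e. when the Euclidean vector `(x i / r ^ a i)ᵢ` has length at
most `1`. If `s = |x|_a ≤ r`, then `(s / r) ^ (2 * a i) ≤ (s / r) ^ 2` because `a i ≥ 1`, so that
vector has length at most `s / r`. With `r = |x|_a + |y|_a` the Euclidean triangle inequality
gives length at most `1` for `x + y`.
-/

open Set Topology

variable {n : ℕ} {a x : Fin n → ℝ} {r : ℝ}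

def anormSum (a x : Fin n → ℝ) (t : ℝ) : ℝ := ∑ i, x i ^ 2 / t ^ (2 * a i)

/-- The paper's anisotropic dilation `δ_{1/r} x`, as a Euclidean vector. -/
def dilate (a : Fin n → ℝ) (r : ℝ) (x : Fin n → ℝ) : EuclideanSpace ℝ (Fin n) :=
  WithLp.toLp 2 fun i => x i / r ^ a i

lemma dilate_add (r : ℝ) (x y : Fin n → ℝ) :
    dilate a r (x + y) = dilate a r x + dilate a r y := by
  ext i
  simp [dilate, add_div]

lemma norm_dilate_sq (hr : 0 < r) (x : Fin n → ℝ) :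
    ‖dilate a r x‖ ^ 2 = anormSum a x r := by
  rw [EuclideanSpace.norm_sq_eq]
  refine Finset.sum_congr rfl fun i _ => ?_
  rw [Real.norm_eq_abs, sq_abs, dilate, div_pow, mul_comm, Real.rpow_mul hr.le, Real.rpow_two]

lemma anorm_zero (a : Fin n → ℝ) : anorm a 0 = 0 := by
  simp [anorm]

lemma anorm_nonneg (a x : Fin n → ℝ) : 0 ≤ anorm a x :=
  Real.sInf_nonneg fun _ ht => ht.1.le

lemma continuousOn_anormSum (a x : Fin n → ℝ) : ContinuousOn (anormSum a x) (Ioi 0) :=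
  continuousOn_finsetSum _ fun _ _ =>
    continuousOn_const.div (continuousOn_id.rpow_const fun _ ht => .inl (ne_of_gt ht))
      fun _ ht => (Real.rpow_pos_of_pos ht _).ne'

lemma anormSum_strictAntiOn (ha : ∀ i, 0 < a i) (hx : x ≠ 0) :
    StrictAntiOn (anormSum a x) (Ioi 0) := by
  intro s (hs : 0 < s) t _ hst
  obtain ⟨j, hj⟩ := Function.ne_iff.mp hx
  have hj : x j ≠ 0 := hj
  have hpow : ∀ i, s ^ (2 * a i) < t ^ (2 * a i) := fun i =>
    Real.rpow_lt_rpow hs.le hst (by linarith [ha i])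
  refine Finset.sum_lt_sum (fun i _ => ?_) ⟨j, Finset.mem_univ j, ?_⟩
  · exact div_le_div_of_nonneg_left (sq_nonneg _) (Real.rpow_pos_of_pos hs _) (hpow i).le
  · exact div_lt_div_of_pos_left (by positivity) (Real.rpow_pos_of_pos hs _) (hpow j)

lemma tendsto_anormSum_atTop (ha : ∀ i, 0 < a i) (x : Fin n → ℝ) :
    Tendsto (anormSum a x) atTop (𝓝 0) := by
  have h := tendsto_finsetSum Finset.univ fun i _ =>
    ((tendsto_rpow_atTop (by linarith [ha i] : 0 < 2 * a i)).inv_tendsto_atTop.const_mul (x i ^ 2))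
  show Tendsto (fun t => ∑ i, x i ^ 2 / t ^ (2 * a i)) atTop (𝓝 0)
  simpa only [div_eq_mul_inv, Pi.inv_apply, mul_zero, Finset.sum_const_zero] using h

lemma exists_one_le_anormSum (ha : ∀ i, 0 < a i) (hx : x ≠ 0) :
    ∃ t, 0 < t ∧ 1 ≤ anormSum a x t := by
  obtain ⟨j, hj⟩ := Function.ne_iff.mp hx
  have hj : x j ≠ 0 := hj
  have hj2 : 0 < x j ^ 2 := by positivity
  have hexp : 2 * a j ≠ 0 := by linarith [ha j]
  refine ⟨(x j ^ 2) ^ (2 * a j)⁻¹, Real.rpow_pos_of_pos hj2 _, ?_⟩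
  calc 1 = x j ^ 2 / ((x j ^ 2) ^ (2 * a j)⁻¹) ^ (2 * a j) := by
        rw [Real.rpow_inv_rpow hj2.le hexp, div_self hj2.ne']
    _ ≤ anormSum a x ((x j ^ 2) ^ (2 * a j)⁻¹) :=
        Finset.single_le_sum (f := fun i => x i ^ 2 / _ ^ (2 * a i))
          (fun i _ => div_nonneg (sq_nonneg _) (Real.rpow_nonneg (Real.rpow_nonneg hj2.le _) _))
          (Finset.mem_univ j)

lemma exists_anormSum_eq_one (ha : ∀ i, 0 < a i) (hx : x ≠ 0) :
    ∃ t, 0 < t ∧ anormSum a x t = 1 := by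
  obtain ⟨s, hs, hs1⟩ := exists_one_le_anormSum ha hx
  obtain ⟨R, hR1, hR⟩ :=
    (((tendsto_anormSum_atTop ha x).eventually (gt_mem_nhds one_pos)).and
      (eventually_gt_atTop 0)).exists
  have hpos : ∀ t ∈ uIcc s R, 0 < t := fun t ht => (lt_min hs hR).trans_le ht.1
  obtain ⟨t, ht, ht1⟩ := intermediate_value_uIcc ((continuousOn_anormSum a x).mono hpos)
    (show (1 : ℝ) ∈ uIcc _ _ from mem_uIcc.mpr (.inr ⟨hR1.le, hs1⟩))
  exact ⟨t, hpos t ht, ht1⟩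

lemma anorm_eq_of_anormSum_eq_one (ha : ∀ i, 0 < a i) (hx : x ≠ 0) {t : ℝ} (ht : 0 < t)
    (h : anormSum a x t = 1) : anorm a x = t := by
  have hset : {s : ℝ | 0 < s ∧ anormSum a x s = 1} = {t} := by
    ext s
    refine ⟨fun ⟨hs, hs1⟩ => (anormSum_strictAntiOn ha hx).injOn hs ht (hs1.trans h.symm),
      ?_⟩
    rintro rfl
    exact ⟨ht, h⟩
  exact (congrArg sInf hset).trans (csInf_singleton t)

lemma anorm_pos (ha : ∀ i, 0 < a i) (hx : x ≠ 0) : 0 < anorm a x := by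
  obtain ⟨t, ht, h⟩ := exists_anormSum_eq_one ha hx
  rwa [anorm_eq_of_anormSum_eq_one ha hx ht h]

lemma anormSum_anorm (ha : ∀ i, 0 < a i) (hx : x ≠ 0) :
    anormSum a x (anorm a x) = 1 := by
  obtain ⟨t, ht, h⟩ := exists_anormSum_eq_one ha hx
  rwa [anorm_eq_of_anormSum_eq_one ha hx ht h]

lemma anorm_le_of_norm_dilate_le_one (ha : ∀ i, 0 < a i) (hr : 0 < r)
    (h : ‖dilate a r x‖ ≤ 1) : anorm a x ≤ r := by
  rcases eq_or_ne x 0 with rfl | hx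
  · rw [anorm_zero]
    exact hr.le
  have hr1 : anormSum a x r ≤ anormSum a x (anorm a x) := by
    rw [anormSum_anorm ha hx, ← norm_dilate_sq hr]
    exact pow_le_one₀ (norm_nonneg _) h
  exact ((anormSum_strictAntiOn ha hx).le_iff_ge hr (anorm_pos ha hx)).mp hr1

lemma anormSum_le_mul (ha : ∀ i, 1 ≤ a i) {s : ℝ} (hs : 0 < s) (hsr : s ≤ r)
    (x : Fin n → ℝ) :
    anormSum a x r ≤ (s / r) ^ 2 * anormSum a x s := by
  have hr : 0 < r := hs.trans_le hsr
  rw [anormSum, anormSum, Finset.mul_sum]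
  refine Finset.sum_le_sum fun i _ => ?_
  have hratio : (s / r) ^ (2 * a i) ≤ (s / r) ^ 2 := by
    rw [← Real.rpow_two]
    exact Real.rpow_le_rpow_of_exponent_ge (div_pos hs hr) ((div_le_one hr).mpr hsr)
      (by linarith [ha i])
  calc x i ^ 2 / r ^ (2 * a i) = (s / r) ^ (2 * a i) * (x i ^ 2 / s ^ (2 * a i)) := by
        rw [Real.div_rpow hs.le hr.le]
        field_simp [(Real.rpow_pos_of_pos hs (2 * a i)).ne']
    _ ≤ (s / r) ^ 2 * (x i ^ 2 / s ^ (2 * a i)) := by gcongr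

lemma norm_dilate_le (ha : ∀ i, 1 ≤ a i) (hr : 0 < r) (h : anorm a x ≤ r) :
    ‖dilate a r x‖ ≤ anorm a x / r := by
  rw [← pow_le_pow_iff_left₀ (norm_nonneg _) (div_nonneg (anorm_nonneg a x) hr.le) two_ne_zero,
    norm_dilate_sq hr]
  rcases eq_or_ne x 0 with rfl | hx
  · simp [anormSum, anorm_zero]
  have ha₀ : ∀ i, 0 < a i := fun i => by linarith [ha i]
  simpa [anormSum_anorm ha₀ hx] using anormSum_le_mul ha (anorm_pos ha₀ hx) h x

theorem statement16 {n : ℕ} (a : Fin n → ℝ) (ha : ∀ i, 1 ≤ a i) (x y : Fin n → ℝ) :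
    anorm a (x + y) ≤ anorm a x + anorm a y := by
  rcases eq_or_ne x 0 with rfl | hx
  · simp [anorm_zero]
  have ha₀ : ∀ i, 0 < a i := fun i => by linarith [ha i]
  set r := anorm a x + anorm a y
  have hr : 0 < r := add_pos_of_pos_of_nonneg (anorm_pos ha₀ hx) (anorm_nonneg a y)
  apply anorm_le_of_norm_dilate_le_one ha₀ hr
  calc ‖dilate a r (x + y)‖ ≤ ‖dilate a r x‖ + ‖dilate a r y‖ := by
        rw [dilate_add]
        exact norm_add_le _ _
    _ ≤ anorm a x / r + anorm a y / r :=
        add_le_add (norm_dilate_le ha hr (le_add_of_nonneg_right (anorm_nonneg a y)))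
          (norm_dilate_le ha hr (le_add_of_nonneg_left (anorm_nonneg a x)))
    _ = 1 := by rw [← add_div, div_self hr.ne']
end
end
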